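/- Let 0 < C < 1 and 0 < η < 1. The BCK distance between the points (C√(1−η²), η) and (C√(2η(1−η)), η) equals arcosh( (√(1+η) − C²√(2η)) / (√(1−C²)·√(1+η−2C²η)) ), and this quantity tends to 0 as η → 1⁻. (Hence the horizontal gap segments M^C_η between the cut-off h-elliptic parabola and the cut-off half distance band have hyperbolic length tending to 0.) -/

import Mathlib

open Filter

noncomputable def arcosh (x : ℝ) : ℝ := Real.log (x + Real.sqrt (x ^ 2 - 1))

/-- The Beltrami--Cayley--Klein model distance between two points of the open unit disk. -/
noncomputable def distBCK (p q : ℝ × ℝ) : ℝ :=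
  arcosh ((1 - p.1 * q.1 - p.2 * q.2) /
    (Real.sqrt (1 - p.1 ^ 2 - p.2 ^ 2) * Real.sqrt (1 - q.1 ^ 2 - q.2 ^ 2)))

/-! Scaling the horizontal chord at height `η` by `1 / √(1 - η²)` does not change the argument
of `arcosh` in the BCK distance, so the gap segment has the length of the segment of the horizontal
diameter between `C` and `C √(2η) / √(1 + η)`. The second endpoint tends to `C` as
`η → 1`, and the distance is continuous and vanishes on the diagonal. -/

open Topology

theorem arcosh_one : arcosh 1 = 0 := by
  simp [arcosh]

theorem continuousAt_arcosh {x : ℝ} (hx : 0 < x) : ContinuousAt arcosh x := by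
  unfold arcosh
  refine ContinuousAt.log (by fun_prop) ?_
  positivity

theorem distBCK_self {p : ℝ × ℝ} (hp : p.1 ^ 2 + p.2 ^ 2 < 1) : distBCK p p = 0 := by
  have hpos : 0 < 1 - p.1 ^ 2 - p.2 ^ 2 := by linarith
  rw [distBCK, Real.mul_self_sqrt hpos.le, ← sq, ← sq, div_self hpos.ne', arcosh_one]

theorem continuousAt_distBCK_right {p q : ℝ × ℝ} (hp : p.1 ^ 2 + p.2 ^ 2 < 1)
    (hq : q.1 ^ 2 + q.2 ^ 2 < 1) : ContinuousAt (distBCK p) q := by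
  have hnum : 0 < 1 - p.1 * q.1 - p.2 * q.2 := by
    nlinarith [sq_nonneg (p.1 - q.1), sq_nonneg (p.2 - q.2)]
  have hp' : 0 < Real.sqrt (1 - p.1 ^ 2 - p.2 ^ 2) := Real.sqrt_pos.mpr (by linarith)
  have hq' : 0 < Real.sqrt (1 - q.1 ^ 2 - q.2 ^ 2) := Real.sqrt_pos.mpr (by linarith)
  exact (continuousAt_arcosh (by positivity)).comp
    (ContinuousAt.div (by fun_prop) (by fun_prop) (by positivity))

theorem distBCK_chord_eq_diameter (x₁ x₂ η : ℝ) (hη : η ^ 2 < 1) :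
    distBCK (Real.sqrt (1 - η ^ 2) * x₁, η) (Real.sqrt (1 - η ^ 2) * x₂, η) =
      distBCK (x₁, 0) (x₂, 0) := by
  have hk : 0 < 1 - η ^ 2 := by linarith
  set k := Real.sqrt (1 - η ^ 2)
  have hk2 : k ^ 2 = 1 - η ^ 2 := Real.sq_sqrt hk.le
  have hrad (x : ℝ) : Real.sqrt (1 - (k * x) ^ 2 - η ^ 2) = k * Real.sqrt (1 - x ^ 2) := by
    rw [← Real.sqrt_mul hk.le, mul_pow, hk2]
    ring_nf
  have hnum : 1 - k * x₁ * (k * x₂) - η * η = k ^ 2 * (1 - x₁ * x₂) := by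
    linear_combination (-1 : ℝ) * hk2
  have hk0 : k ^ 2 ≠ 0 := by positivity
  simp only [distBCK, hrad, hnum]
  rw [show ∀ a b : ℝ, k * a * (k * b) = k ^ 2 * (a * b) by intros; ring,
    mul_div_mul_left _ _ hk0]
  simp

theorem distBCK_diameter_gap (C η : ℝ) (hη : 0 ≤ η) :
    distBCK (C, 0) (C * Real.sqrt (2 * η) / Real.sqrt (1 + η), 0) =
      arcosh ((Real.sqrt (1 + η) - C ^ 2 * Real.sqrt (2 * η)) /
        (Real.sqrt (1 - C ^ 2) * Real.sqrt (1 + η - 2 * C ^ 2 * η))) := by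
  have ht : 0 < Real.sqrt (1 + η) := Real.sqrt_pos.mpr (by linarith)
  have hrad : Real.sqrt (1 - (C * Real.sqrt (2 * η) / Real.sqrt (1 + η)) ^ 2) =
      Real.sqrt (1 + η - 2 * C ^ 2 * η) / Real.sqrt (1 + η) := by
    rw [← Real.sqrt_div' _ (by linarith), div_pow, mul_pow, Real.sq_sqrt (by linarith),
      Real.sq_sqrt (by linarith)]
    congr 1
    field_simp
  simp only [distBCK, hrad, mul_zero, sub_zero, zero_pow two_ne_zero]
  congr 1
  field_simp

theorem mul_sqrt_two_mul_mul_one_sub (C : ℝ) {η : ℝ} (h0 : 0 ≤ η) (h1 : η ≤ 1) :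
    C * Real.sqrt (2 * η * (1 - η)) =
      Real.sqrt (1 - η ^ 2) * (C * Real.sqrt (2 * η) / Real.sqrt (1 + η)) := by
  have ht : 0 < Real.sqrt (1 + η) := Real.sqrt_pos.mpr (by linarith)
  rw [show 1 - η ^ 2 = (1 - η) * (1 + η) by ring,
    show 2 * η * (1 - η) = (1 - η) * (2 * η) by ring,
    Real.sqrt_mul (by linarith) (1 + η), Real.sqrt_mul (by linarith) (2 * η)]
  field_simp

theorem gap_segment_length_tendsto_zero (C : ℝ) (hC0 : 0 < C) (hC1 : C < 1) :
    (∀ η : ℝ, 0 < η → η < 1 →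
      distBCK (C * Real.sqrt (1 - η ^ 2), η) (C * Real.sqrt (2 * η * (1 - η)), η) =
        arcosh ((Real.sqrt (1 + η) - C ^ 2 * Real.sqrt (2 * η)) /
          (Real.sqrt (1 - C ^ 2) * Real.sqrt (1 + η - 2 * C ^ 2 * η)))) ∧
    Tendsto (fun η : ℝ =>
        arcosh ((Real.sqrt (1 + η) - C ^ 2 * Real.sqrt (2 * η)) /
          (Real.sqrt (1 - C ^ 2) * Real.sqrt (1 + η - 2 * C ^ 2 * η))))
      (nhdsWithin 1 (Set.Iio 1)) (nhds 0) := by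
  set ξ : ℝ → ℝ := fun η => C * Real.sqrt (2 * η) / Real.sqrt (1 + η)
  refine ⟨fun η hη0 hη1 => ?_, ?_⟩
  · rw [mul_sqrt_two_mul_mul_one_sub C hη0.le hη1.le, mul_comm C,
      distBCK_chord_eq_diameter _ _ _ (by nlinarith)]
    exact distBCK_diameter_gap C η hη0.le
  have hdisk : (C, (0 : ℝ)).1 ^ 2 + (C, (0 : ℝ)).2 ^ 2 < 1 := by
    show C ^ 2 + 0 ^ 2 < 1
    nlinarith
  have hξ1 : ξ 1 = C := by norm_num [ξ]
  have hξ : ContinuousAt (fun η => (ξ η, (0 : ℝ))) 1 := by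
    have : Real.sqrt (1 + 1) ≠ 0 := by positivity
    simp only [ξ]
    fun_prop (disch := assumption)
  have hlim : Tendsto (fun η => distBCK (C, 0) (ξ η, 0)) (𝓝 1) (𝓝 0) := by
    have hcont : ContinuousAt (fun η => distBCK (C, 0) (ξ η, 0)) 1 :=
      (continuousAt_distBCK_right hdisk hdisk).comp_of_eq hξ (by rw [hξ1])
    simpa only [hξ1, distBCK_self hdisk] using hcont.tendsto
  refine (hlim.mono_left nhdsWithin_le_nhds).congr' ?_
  filter_upwards [Ioo_mem_nhdsLT one_pos] with η hη
  exact distBCK_diameter_gap C η hη.1.le
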